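/- arXiv:1701.08788 — 5 statements merged into one kernel-verified Lean document; each statement's English description precedes it below -/
import Mathlib

section
/- If S is a sequence of length n−1 in the cyclic group C_n (n ≥ 2) that is free of product-1 subsequences, then S consists of n−1 copies of a single generator g of C_n. -/
/-!
In a finite abelian group `G`, the `m + 1` prefix products of any ordering of a product-one-free
sequence of length `m` are pairwise distinct, since two equal ones would make the block between
them a product-one subsequence. When `|G| = m + 1` they therefore exhaust `G`. Ordering the
sequence as `b, a, …` and looking for `a` among the prefix products forces `a = b`; for the constant
ordering `g, g, …` the prefix products are powers of `g`, so `g` generates `G`.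
-/

/-- A sequence (multiset) in a group is *free of product-1 subsequences* if no
nonempty subfamily can be multiplied in some order to give the identity. -/
def IsProdOneFree {G : Type*} [Group G] (S : Multiset G) : Prop :=
  ¬ ∃ T : Multiset G, T ≤ S ∧ T ≠ 0 ∧ ∃ l : List G, (l : Multiset G) = T ∧ l.prod = 1

namespace IsProdOneFree

variable {G : Type*} [CommGroup G]

theorem prod_ne_one {S T : Multiset G} (h : IsProdOneFree S) (hT : T ≤ S) (hT0 : T ≠ 0) :
    T.prod ≠ 1 := fun hprod =>
  h ⟨T, hT, hT0, T.toList, T.coe_toList, by rwa [Multiset.prod_toList]⟩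

theorem take_prod_ne_take_prod {l : List G} (h : IsProdOneFree (l : Multiset G)) {i j : ℕ}
    (hij : i < j) (hj : j ≤ l.length) : (l.take i).prod ≠ (l.take j).prod := by
  obtain ⟨d, rfl⟩ := Nat.exists_eq_add_of_lt hij
  set block := (l.drop i).take (d + 1)
  intro heq
  rw [add_assoc, List.take_add, List.prod_append, left_eq_mul] at heq
  refine h.prod_ne_one (T := block) ?_ ?_ (by simpa using heq)
  · exact Multiset.coe_le.mpr ((List.take_sublist _ _).trans (List.drop_sublist _ _)).subperm
  · simp only [ne_eq, Multiset.coe_eq_zero, ← List.length_eq_zero_iff, List.length_take,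
      List.length_drop, block]
    omega

theorem injective_take_prod {l : List G} (h : IsProdOneFree (l : Multiset G)) :
    Function.Injective fun k : Fin (l.length + 1) => (l.take k).prod := by
  intro i j hij
  rcases lt_trichotomy i j with hlt | heq | hgt
  · exact absurd hij (h.take_prod_ne_take_prod hlt (by omega))
  · exact heq
  · exact absurd hij.symm (h.take_prod_ne_take_prod hgt (by omega))

theorem exists_take_prod_eq [Finite G] {l : List G} (h : IsProdOneFree (l : Multiset G))
    (hcard : Nat.card G = l.length + 1) (g : G) : ∃ k, (l.take k).prod = g := by
  have hbij := h.injective_take_prod.bijective_of_nat_card_le (by rw [hcard, Nat.card_fin])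
  obtain ⟨k, hk⟩ := hbij.surjective g
  exact ⟨k, hk⟩

theorem eq_of_mem [Finite G] {S : Multiset G} (h : IsProdOneFree S)
    (hcard : Nat.card G = Multiset.card S + 1) {a b : G} (ha : a ∈ S) (hb : b ∈ S) : a = b := by
  by_contra hab
  obtain ⟨T, rfl⟩ := Multiset.exists_cons_of_mem hb
  obtain ⟨U, rfl⟩ := Multiset.exists_cons_of_mem ((Multiset.mem_cons.mp ha).resolve_left hab)
  have hl : ((b :: a :: U.toList : List G) : Multiset G) = b ::ₘ a ::ₘ U := by
    rw [← Multiset.cons_coe, ← Multiset.cons_coe, Multiset.coe_toList]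
  rw [← hl] at h hcard
  obtain ⟨k, hk⟩ := h.exists_take_prod_eq hcard a
  match k, hk with
  | 0, hk => exact h.prod_ne_one (T := {a}) (by simp) (by simp) (by simpa using hk.symm)
  | 1, hk => exact hab (by simpa using hk.symm)
  | m + 2, hk =>
    -- `a = b * a * p` says that `b` together with the prefix `p` of `U` has product one
    refine h.prod_ne_one (T := b ::ₘ ((U.toList.take m : List G) : Multiset G)) ?_ (by simp) ?_
    · rw [hl, Multiset.cons_le_cons_iff]
      exact ((Multiset.coe_le.mpr (List.take_sublist m _).subperm).trans_eq U.coe_toList).trans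
        (Multiset.le_cons_self U a)
    · rw [List.take_succ_cons, List.take_succ_cons, List.prod_cons, List.prod_cons,
        mul_left_comm] at hk
      simpa using mul_eq_left.mp hk

theorem zpowers_eq_top [Finite G] {g : G} {m : ℕ}
    (h : IsProdOneFree ((List.replicate m g : List G) : Multiset G)) (hcard : Nat.card G = m + 1) :
    Subgroup.zpowers g = ⊤ := by
  refine eq_top_iff.mpr fun x _ => ?_
  obtain ⟨k, rfl⟩ := h.exists_take_prod_eq (by rwa [List.length_replicate]) x
  rw [List.take_replicate, List.prod_replicate]
  exact Subgroup.pow_mem _ (Subgroup.mem_zpowers g) _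

end IsProdOneFree

theorem inverse_cyclic (n : ℕ) (hn : 2 ≤ n)
    (S : Multiset (Multiplicative (ZMod n))) (hS : Multiset.card S = n - 1)
    (hfree : IsProdOneFree S) :
    ∃ g : Multiplicative (ZMod n),
      Subgroup.zpowers g = ⊤ ∧ S = Multiset.replicate (n - 1) g := by
  have : NeZero n := ⟨by omega⟩
  have hcard : Nat.card (Multiplicative (ZMod n)) = Multiset.card S + 1 := by
    rw [Nat.card_congr Multiplicative.toAdd, Nat.card_zmod, hS]
    omega
  obtain ⟨g, hg⟩ := Multiset.card_pos_iff_exists_mem.mp (by omega : 0 < Multiset.card S)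
  have hrep : S = Multiset.replicate (n - 1) g :=
    Multiset.eq_replicate.mpr ⟨hS, fun b hb => hfree.eq_of_mem hcard hb hg⟩
  refine ⟨g, IsProdOneFree.zpowers_eq_top (m := n - 1) ?_ (by rwa [← hS]), hrep⟩
  rwa [Multiset.coe_replicate, ← hrep]
end

section
/- For n ≥ 4, in the dihedral group D_{2n}, any sequence of the form (y^t)^{n−1}(xy^s), where gcd(t, n) = 1 and 0 ≤ s ≤ n−1, is free of product-1 subsequences. -/
/-!
A subsequence with product `1` cannot contain the reflection `x y^s`: reflections have sign `-1`
under the homomorphism `D_{2n} → {±1}` killing the rotations, and the sequence has only one.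
So it consists of `k` copies of `y^t` with `0 < k < n`, but `y^t` has order `n` since `t` is prime
to `n`.
-/

open DihedralGroup

section IsProdOneFree

variable {G : Type*} [Group G]

theorem isProdOneFree_replicate {g : G} {k : ℕ} (hk : orderOf g = 0 ∨ k < orderOf g) :
    IsProdOneFree (Multiset.replicate k g) := by
  rintro ⟨_, hlk, hl0, l, rfl, hl⟩
  have hl_eq : l = List.replicate l.length g :=
    List.eq_replicate_length.2 fun x hx =>
      Multiset.eq_of_mem_replicate (Multiset.mem_of_le hlk hx)
  have hlen_pos : 0 < l.length := List.length_pos_iff.2 (by simpa using hl0)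
  have hlen_le : l.length ≤ k := by simpa using Multiset.card_le_card hlk
  rw [hl_eq, List.prod_replicate] at hl
  have hg_pos : 0 < orderOf g := (isOfFinOrder_iff_pow_eq_one.2 ⟨_, hlen_pos, hl⟩).orderOf_pos
  have := orderOf_le_of_pow_eq_one hlen_pos hl
  omega

theorem IsProdOneFree.cons_of_map_ne_one {H : Type*} [CommGroup H] (φ : G →* H)
    {S : Multiset G} (hS : IsProdOneFree S) (hS_ker : ∀ x ∈ S, φ x = 1) {g : G}
    (hg : φ g ≠ 1) : IsProdOneFree (g ::ₘ S) := by
  classical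
  rintro ⟨_, hlS, hl0, l, rfl, hl⟩
  by_cases hgl : g ∈ l
  · have hl_cons : (l : Multiset G) = g ::ₘ (l.erase g : List G) := by
      rw [← Multiset.coe_erase, Multiset.cons_erase (Multiset.mem_coe.2 hgl)]
    have hrest : ((l.erase g : List G) : Multiset G) ≤ S :=
      (Multiset.cons_le_cons_iff g).1 (hl_cons ▸ hlS)
    have hrest_one : ((l.erase g).map φ).prod = 1 :=
      List.prod_eq_one fun y hy => by
        obtain ⟨x, hx, rfl⟩ := List.mem_map.1 hy
        exact hS_ker x (Multiset.mem_of_le hrest hx)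
    apply hg
    calc φ g = φ l.prod := by
          rw [← List.prod_hom, ((List.perm_cons_erase hgl).map φ).prod_eq, List.map_cons,
            List.prod_cons, hrest_one, mul_one]
      _ = 1 := by rw [hl, map_one]
  · exact hS ⟨l, (Multiset.le_cons_of_notMem hgl).1 hlS, hl0, l, rfl, hl⟩

end IsProdOneFree

namespace DihedralGroup

variable {n : ℕ}

def sign : DihedralGroup n →* ℤˣ where
  toFun
    | r _ => 1
    | sr _ => -1
  map_one' := rfl
  map_mul' := by rintro (a | a) (b | b) <;> simp

@[simp]
theorem sign_r (i : ZMod n) : sign (r i) = 1 :=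
  rfl

@[simp]
theorem sign_sr (i : ZMod n) : sign (sr i) = -1 :=
  rfl

theorem orderOf_r_natCast_of_coprime {t : ℕ} (ht : t.Coprime n) :
    orderOf (r (t : ZMod n)) = n := by
  rw [← r_one_pow, Nat.Coprime.orderOf_pow (by rwa [orderOf_r_one, Nat.coprime_comm]),
    orderOf_r_one]

end DihedralGroup

theorem dihedral_extremal_is_free_general (n : ℕ) (t s : ℕ) (htn : Nat.gcd t n = 1) :
    IsProdOneFree
      (Multiset.replicate (n - 1) (DihedralGroup.r (t : ZMod n)) +
        {DihedralGroup.sr (s : ZMod n)}) := by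
  have hrot : IsProdOneFree (Multiset.replicate (n - 1) (r (t : ZMod n))) :=
    isProdOneFree_replicate (by rw [orderOf_r_natCast_of_coprime htn]; omega)
  rw [add_comm, Multiset.singleton_add]
  refine hrot.cons_of_map_ne_one DihedralGroup.sign (fun x hx => ?_) (by simp)
  rw [Multiset.eq_of_mem_replicate hx, sign_r]

theorem dihedral_extremal_is_free (n : ℕ) (hn : 4 ≤ n) (t s : ℕ)
    (ht1 : 1 ≤ t) (ht2 : t ≤ n - 1) (htn : Nat.gcd t n = 1) (hs : s ≤ n - 1) :
    IsProdOneFree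
      (Multiset.replicate (n - 1) (DihedralGroup.r (t : ZMod n)) +
        {DihedralGroup.sr (s : ZMod n)}) :=
  dihedral_extremal_is_free_general n t s htn
end

section
/- For n ≥ 4, if S is a sequence of n elements in the dihedral group D_{2n} that is free of product-1 subsequences, then S = (y^t)^{n−1}(xy^s) for some t with 1 ≤ t ≤ n−1, gcd(t, n) = 1, and some 0 ≤ s ≤ n−1. -/
open Multiset

section

variable {G : Type*}

def ZeroSumFree [AddCommMonoid G] (B : Multiset G) : Prop :=
  ∀ U ≤ B, U ≠ 0 → U.sum ≠ 0

def subsetSums [AddCommMonoid G] [DecidableEq G] (B : Multiset G) : Finset G :=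
  B.powerset.toFinset.image Multiset.sum

theorem mem_subsetSums [AddCommMonoid G] [DecidableEq G] {B : Multiset G} {x : G} :
    x ∈ subsetSums B ↔ ∃ U ≤ B, U.sum = x := by
  simp [subsetSums]

namespace ZeroSumFree

section AddCommMonoid

variable [AddCommMonoid G] {B C : Multiset G}

theorem mono (hB : ZeroSumFree B) (h : C ≤ B) : ZeroSumFree C :=
  fun U hU => hB U (hU.trans h)

theorem ne_zero_of_mem (hB : ZeroSumFree B) {a : G} (ha : a ∈ B) : a ≠ 0 := by
  simpa using hB {a} (singleton_le.mpr ha) (singleton_ne_zero a)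

theorem lt_addOrderOf {t : G} {k : ℕ} (ht : IsOfFinAddOrder t)
    (h : ZeroSumFree (replicate k t)) : k < addOrderOf t := by
  by_contra! hk
  refine h (replicate (addOrderOf t) t) ((replicate_le_replicate t).mpr hk) ?_ ?_
  · exact fun h0 => ht.addOrderOf_pos.ne' (by simpa using congrArg card h0)
  · rw [sum_replicate, addOrderOf_nsmul_eq_zero]

end AddCommMonoid

section AddCancelCommMonoid

variable [AddCancelCommMonoid G]

theorem card_lt_card_subsetSums [DecidableEq G] {B : Multiset G} (hB : ZeroSumFree B) :
    card B < (subsetSums B).card := by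
  induction B using Multiset.induction_on with
  | empty => simp [subsetSums]
  | cons b B ih =>
    have hsub : subsetSums B ⊆ subsetSums (b ::ₘ B) := fun x hx => by
      obtain ⟨U, hU, rfl⟩ := mem_subsetSums.mp hx
      exact mem_subsetSums.mpr ⟨U, hU.trans (le_cons_self B b), rfl⟩
    have hshift : (subsetSums B).image (b + ·) ⊆ subsetSums (b ::ₘ B) := fun x hx => by
      obtain ⟨_, hy, rfl⟩ := Finset.mem_image.mp hx
      obtain ⟨U, hU, rfl⟩ := mem_subsetSums.mp hy
      exact mem_subsetSums.mpr ⟨b ::ₘ U, cons_le_cons b hU, sum_cons b U⟩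
    -- if adding `b` created no new sum, translation by `b` would permute the sums of `B`,
    -- and `0` would be `b` plus one of them
    have hssub : subsetSums B ⊂ subsetSums (b ::ₘ B) := by
      refine hsub.ssubset_of_ne fun heq => ?_
      have hperm : (subsetSums B).image (b + ·) = subsetSums B :=
        Finset.eq_of_subset_of_card_le (heq ▸ hshift)
          (Finset.card_image_of_injective _ (add_right_injective b)).ge
      have h0 : (0 : G) ∈ (subsetSums B).image (b + ·) := by
        rw [hperm]
        exact mem_subsetSums.mpr ⟨0, zero_le B, sum_zero⟩
      obtain ⟨_, hy, hy0⟩ := Finset.mem_image.mp h0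
      obtain ⟨U, hU, rfl⟩ := mem_subsetSums.mp hy
      exact hB (b ::ₘ U) (cons_le_cons b hU) (cons_ne_zero) (by simpa using hy0)
    have := ih (hB.mono (le_cons_self B b))
    have := Finset.card_lt_card hssub
    rw [card_cons]
    omega

theorem card_lt_card [Fintype G] {B : Multiset G} (hB : ZeroSumFree B) :
    card B < Fintype.card G := by
  classical
  exact hB.card_lt_card_subsetSums.trans_le (Finset.card_le_univ _)

theorem injective_sum_take {l : List G} (hl : ZeroSumFree (l : Multiset G)) :
    Function.Injective fun i : Fin (l.length + 1) => (l.take i).sum := by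
  refine Function.Injective.of_lt_imp_ne fun i j hij heq => ?_
  set block := (l.drop i).take (j - i)
  have htake : l.take j = l.take i ++ block := by
    rw [← List.take_add, Nat.add_sub_cancel' hij.le]
  have hblock : block ≠ [] := by
    simp only [block, ne_eq, List.take_eq_nil_iff, List.drop_eq_nil_iff, not_or]
    omega
  have hle : (block : Multiset G) ≤ l :=
    coe_le.mpr ((List.take_sublist _ _).trans (List.drop_sublist _ _)).subperm
  refine hl block hle (by simpa using hblock) ?_
  simpa [htake] using heq

theorem exists_eq_replicate [Fintype G] {B : Multiset G} (hB : ZeroSumFree B)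
    (hcard : card B + 1 = Fintype.card G) : ∃ t, B = replicate (card B) t := by
  suffices hall : ∀ a ∈ B, ∀ b ∈ B, a = b by
    rcases B.empty_or_exists_mem with rfl | ⟨t, ht⟩
    · exact ⟨0, rfl⟩
    · exact ⟨t, eq_replicate.mpr ⟨rfl, fun b hb => hall b hb t ht⟩⟩
  intro a ha b hb
  by_contra hab
  obtain ⟨B', rfl⟩ := exists_cons_of_mem ha
  obtain ⟨C, rfl⟩ := exists_cons_of_mem ((mem_cons.mp hb).resolve_left (Ne.symm hab))
  set L := b :: a :: C.toList
  have hL : (L : Multiset G) = a ::ₘ b ::ₘ C := by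
    rw [← cons_coe, ← cons_coe, coe_toList, cons_swap]
  -- the `card G` prefix sums of `L` are distinct, so `a` is one of them
  have hsurj : Function.Surjective fun i : Fin (L.length + 1) => (L.take i).sum :=
    ((Fintype.bijective_iff_injective_and_card _).mpr
      ⟨(hL ▸ hB).injective_sum_take, by simp [← hcard, L]⟩).2
  obtain ⟨⟨_ | _ | j, _⟩, hi⟩ := hsurj a
  · exact hB.ne_zero_of_mem ha (by simpa using hi.symm)
  · exact hab (by simpa [L] using hi.symm)
  · have hzero : b + (C.toList.take j).sum = 0 := by
      refine add_left_cancel (a := a) ?_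
      simpa [L, add_left_comm a b] using hi
    have hle : b ::ₘ ((C.toList.take j : List G) : Multiset G) ≤ a ::ₘ b ::ₘ C := by
      refine (cons_le_cons b ?_).trans (le_cons_self _ a)
      simpa using (coe_le.mpr (List.take_sublist j C.toList).subperm)
    exact hB _ hle cons_ne_zero (by simpa using hzero)

end AddCancelCommMonoid

end ZeroSumFree

theorem card_add_card_lt_of_forall_sum_sub_sum_ne [AddCommGroup G] [Fintype G]
    [DecidableEq G] {B : Multiset G} {A : Finset G} (hB : ZeroSumFree B) (hB0 : B ≠ 0)
    (hA : 1 < A.card)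
    (hAB : ∀ u ∈ A, ∀ v ∈ A, u ≠ v →
      ∀ U W : Multiset G, U + W ≤ B → U.sum - W.sum ≠ u - v) :
    A.card + card B < Fintype.card G := by
  obtain ⟨a₁, ha₁, a₂, ha₂, ha⟩ := Finset.one_lt_card.mp hA
  obtain ⟨c, hc⟩ := exists_mem_of_ne_zero hB0
  by_contra! hcard
  set D := A.image (· - a₁)
  have hD : D.card = A.card := Finset.card_image_of_injective _ (sub_left_injective)
  have hinter : D ∩ subsetSums B ⊆ {0} := fun x hx => by
    obtain ⟨hxD, hxB⟩ := Finset.mem_inter.mp hx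
    obtain ⟨u, hu, rfl⟩ := Finset.mem_image.mp hxD
    obtain ⟨U, hU, hUx⟩ := mem_subsetSums.mp hxB
    by_contra hne
    exact hAB u hu a₁ ha₁ (fun h => hne (by simp [h])) U 0 (by simpa using hU)
      (by simpa using hUx)
  -- `D` and the subset sums meet only in `0`, and their sizes add up to more than `card G`
  have hcover : D ∪ subsetSums B = Finset.univ := by
    refine Finset.eq_univ_of_card _ (le_antisymm (Finset.card_le_univ _) ?_)
    have hunion := Finset.card_union_add_card_inter D (subsetSums B)
    have hinter_card : (D ∩ subsetSums B).card ≤ 1 := Finset.card_le_card hinter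
    have hsums := hB.card_lt_card_subsetSums
    omega
  have hx := hcover ▸ Finset.mem_univ (c + (a₂ - a₁))
  rcases Finset.mem_union.mp hx with hxD | hxB
  · obtain ⟨u, hu, hux⟩ := Finset.mem_image.mp hxD
    have hcu : c = u - a₂ := by rw [show u - a₂ = u - a₁ - (a₂ - a₁) by abel, hux]; abel
    have hua : u ≠ a₂ := fun h => hB.ne_zero_of_mem hc (by simp [hcu, h])
    exact hAB u hu a₂ ha₂ hua {c} 0 (by simpa using hc) (by simpa using hcu)
  · obtain ⟨U, hU, hUx⟩ := mem_subsetSums.mp hxB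
    by_cases hcU : c ∈ U
    · obtain ⟨U', rfl⟩ := exists_cons_of_mem hcU
      exact hAB a₂ ha₂ a₁ ha₁ (Ne.symm ha) U' 0 (by simpa using (le_cons_self U' c).trans hU)
        (by simpa using hUx)
    · obtain ⟨C, rfl⟩ := exists_cons_of_mem hc
      refine hAB a₂ ha₂ a₁ ha₁ (Ne.symm ha) U {c} ?_ ?_
      · simpa [add_comm U] using (le_cons_of_notMem hcU).mp hU
      · simp [hUx]

theorem ZMod.coprime_val_of_zeroSumFree_replicate {n : ℕ} [NeZero n] {t : ZMod n}
    (h : ZeroSumFree (replicate (n - 1) t)) : t.val.Coprime n := by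
  have hlt := h.lt_addOrderOf (isOfFinAddOrder_of_finite t)
  have hdvd : addOrderOf t ∣ n := by simpa using addOrderOf_dvd_card (x := t)
  have horder : addOrderOf t = n := le_antisymm (Nat.le_of_dvd (NeZero.pos n) hdvd) (by omega)
  rw [← ZMod.natCast_zmod_val t, ZMod.addOrderOf_coe _ (NeZero.ne n), Nat.div_eq_self] at horder
  exact Nat.coprime_comm.mp (horder.resolve_left (NeZero.ne n))

end

theorem IsProdOneFree.list_prod_ne_one {G : Type*} [Group G] {S : Multiset G}
    (h : IsProdOneFree S) {l : List G} (hl : (l : Multiset G) ≤ S) (hne : l ≠ []) :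
    l.prod ≠ 1 :=
  fun hprod => h ⟨l, hl, by simpa using hne, l, rfl, hprod⟩

namespace DihedralGroup

variable {n : ℕ}

theorem list_prod_map_r (l : List (ZMod n)) : (l.map r).prod = r l.sum := by
  induction l with
  | nil => rfl
  | cons a l ih => simp [ih, r_mul_r]

theorem exists_eq_map_r_add_map_sr (S : Multiset (DihedralGroup n)) :
    ∃ B A : Multiset (ZMod n), S = B.map r + A.map sr := by
  induction S using Multiset.induction_on with
  | empty => exact ⟨0, 0, rfl⟩
  | cons g S ih =>
    obtain ⟨B, A, rfl⟩ := ih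
    cases g with
    | r i => exact ⟨i ::ₘ B, A, by simp⟩
    | sr i => exact ⟨B, i ::ₘ A, by simp⟩

variable {B A : Multiset (ZMod n)}

theorem zeroSumFree_of_isProdOneFree (h : IsProdOneFree (B.map r + A.map sr)) :
    ZeroSumFree B := by
  intro U hU hU0 hsum
  refine h.list_prod_ne_one (l := U.toList.map r) ?_ (by simpa using hU0) ?_
  · rw [← map_coe, coe_toList]
    exact (map_le_map hU).trans (le_add_right _ _)
  · rw [list_prod_map_r, sum_toList, hsum, r_zero]

theorem sum_sub_sum_ne_of_isProdOneFree (h : IsProdOneFree (B.map r + A.map sr))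
    {U W : Multiset (ZMod n)} (hUW : U + W ≤ B) {u v : ZMod n} (huv : {u, v} ≤ A) :
    U.sum - W.sum ≠ u - v := by
  intro hsum
  refine h.list_prod_ne_one (l := sr v :: (U.toList.map r ++ sr u :: W.toList.map r)) ?_
    (List.cons_ne_nil _ _) ?_
  · have hl : ((sr v :: (U.toList.map r ++ sr u :: W.toList.map r) : List _) : Multiset _) =
        (U + W).map r + ({u, v} : Multiset (ZMod n)).map sr := by
      simp only [← cons_coe, ← coe_add, ← map_coe, coe_toList, insert_eq_cons, map_add,
        map_singleton, ← singleton_add]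
      abel
    exact hl ▸ add_le_add (map_le_map hUW) (map_le_map huv)
  · rw [List.prod_cons, List.prod_append, List.prod_cons, list_prod_map_r, list_prod_map_r,
      sum_toList, sum_toList, sr_mul_r, r_mul_sr, sr_mul_sr, ← r_zero]
    congr 1
    linear_combination -hsum

theorem nodup_of_isProdOneFree (h : IsProdOneFree (B.map r + A.map sr)) : A.Nodup := by
  refine nodup_iff_ne_cons_cons.mpr fun a t hA => ?_
  refine sum_sub_sum_ne_of_isProdOneFree h (U := 0) (W := 0) (zero_le B) (u := a) (v := a) ?_
    (by simp)
  simp [hA]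

/-- `sr b * sr a * sr c * sr d = r (a - b - (c - d))`. -/
theorem sub_ne_sub_of_isProdOneFree (h : IsProdOneFree (B.map r + A.map sr))
    {a b c d : ZMod n} (habcd : {a, b, c, d} ≤ A) : a - b ≠ c - d := by
  intro hsub
  refine h.list_prod_ne_one (l := [sr b, sr a, sr c, sr d]) ?_ (List.cons_ne_nil _ _) ?_
  · have hl : (([sr b, sr a, sr c, sr d] : List _) : Multiset _) =
        ({a, b, c, d} : Multiset (ZMod n)).map sr := by
      simp only [insert_eq_cons, map_cons, map_singleton]
      exact cons_swap (sr b) (sr a) {sr c, sr d}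
    exact hl ▸ (map_le_map habcd).trans (le_add_left _ _)
  · simp only [List.prod_cons, List.prod_nil, mul_one, sr_mul_sr, ← mul_assoc, r_mul_r]
    rw [← r_zero]
    congr 1
    linear_combination hsub

theorem card_lt_two_of_isProdOneFree (hn : 4 ≤ n) (h : IsProdOneFree (B.map r + A.map sr))
    (hcard : Multiset.card B + Multiset.card A = n) : Multiset.card A < 2 := by
  have : NeZero n := ⟨by omega⟩
  have hA := nodup_of_isProdOneFree h
  by_contra! hA2
  rcases eq_or_ne B 0 with rfl | hB0
  · -- all `n` elements of `ZMod n` are in `A`, among them `3 - 2 = 1 - 0`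
    have hAuniv : A.toFinset = Finset.univ := Finset.eq_univ_of_card _ (by
      simpa [toFinset_card_of_nodup hA] using hcard)
    have h0123 : ({3, 2, 1, 0} : Multiset (ZMod n)).Nodup := by
      refine Nodup.of_map ZMod.val ?_
      have hval (k : ℕ) (hk : k < n) : (k : ZMod n).val = k := ZMod.val_natCast_of_lt hk
      have h3 := hval 3 (by omega)
      have h2 := hval 2 (by omega)
      have h1 := hval 1 (by omega)
      simp only [Nat.cast_ofNat, Nat.cast_one] at h3 h2 h1
      simp [h3, h2, h1]
    refine sub_ne_sub_of_isProdOneFree h ((le_iff_subset h0123).mpr fun x _ => ?_) (by ring)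
    simp [← mem_toFinset, hAuniv]
  · classical
    have := card_add_card_lt_of_forall_sum_sub_sum_ne (zeroSumFree_of_isProdOneFree h) hB0
      (A := A.toFinset) (by rwa [toFinset_card_of_nodup hA]) fun u hu v hv huv U W hUW =>
        sum_sub_sum_ne_of_isProdOneFree h hUW ((le_iff_subset (by simpa using huv)).mpr
          (by simpa using ⟨mem_toFinset.mp hu, mem_toFinset.mp hv⟩))
    rw [toFinset_card_of_nodup hA, ZMod.card] at this
    omega

end DihedralGroup

theorem inverse_dihedral (n : ℕ) (hn : 4 ≤ n)
    (S : Multiset (DihedralGroup n)) (hS : Multiset.card S = n)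
    (hfree : IsProdOneFree S) :
    ∃ t s : ℕ, 1 ≤ t ∧ t ≤ n - 1 ∧ Nat.gcd t n = 1 ∧ s ≤ n - 1 ∧
      S = Multiset.replicate (n - 1) (DihedralGroup.r (t : ZMod n)) +
        {DihedralGroup.sr (s : ZMod n)} := by
  have : NeZero n := ⟨by omega⟩
  obtain ⟨B, A, rfl⟩ := DihedralGroup.exists_eq_map_r_add_map_sr S
  have hB := DihedralGroup.zeroSumFree_of_isProdOneFree hfree
  have hcard : card B + card A = n := by simpa using hS
  obtain ⟨s, rfl⟩ : ∃ s, A = {s} := by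
    have hA0 := hB.card_lt_card
    have hA2 := DihedralGroup.card_lt_two_of_isProdOneFree hn hfree hcard
    rw [ZMod.card] at hA0
    exact card_eq_one.mp (by omega)
  have hB1 : card B = n - 1 := by simp at hcard; omega
  obtain ⟨t, hBt⟩ := hB.exists_eq_replicate (by rw [ZMod.card]; omega)
  rw [hB1] at hBt
  subst hBt
  have ht := ZMod.coprime_val_of_zeroSumFree_replicate hB
  refine ⟨t.val, s.val, Nat.pos_of_ne_zero fun h0 => ?_, ?_, ht, ?_, ?_⟩
  · rw [h0, Nat.coprime_zero_left] at ht
    omega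
  · have := t.val_lt; omega
  · have := s.val_lt; omega
  · simp
end

section
/- In the dihedral group D_6 (n = 3), a sequence S of 3 elements is free of product-1 subsequences if and only if S = (y^t, y^t, xy^ν) with t ∈ {1, 2} and ν ∈ {0, 1, 2}, or S = (x, xy, xy²). -/
lemma isProdOneFree_coe_iff {G : Type*} [Group G] (L : List G) :
    IsProdOneFree (L : Multiset G) ↔
      ∀ l ∈ L.sublists, ∀ p ∈ l.permutations', p ≠ [] → p.prod ≠ 1 := by
  constructor
  · intro h l hl p hp hp_ne hp_prod
    rw [List.mem_sublists] at hl
    rw [List.mem_permutations'] at hp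
    refine h ⟨p, ?_, by simpa using hp_ne, p, rfl, hp_prod⟩
    exact Multiset.coe_le.mpr (hp.subperm.trans hl.subperm)
  · rintro h ⟨T, hTS, hT_ne, p, rfl, hp_prod⟩
    obtain ⟨l, hlp, hlL⟩ := Multiset.coe_le.mp hTS
    refine h l (List.mem_sublists.mpr hlL) p (List.mem_permutations'.mpr hlp.symm) ?_ hp_prod
    rintro rfl
    exact hT_ne rfl

theorem inverse_dihedral_six (S : Multiset (DihedralGroup 3))
    (hS : Multiset.card S = 3) :
    IsProdOneFree S ↔
      ((∃ t ν : ZMod 3, (t = 1 ∨ t = 2) ∧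
          S = {DihedralGroup.r t, DihedralGroup.r t, DihedralGroup.sr ν}) ∨
        S = {DihedralGroup.sr 0, DihedralGroup.sr 1, DihedralGroup.sr 2}) := by
  obtain ⟨a, b, c, rfl⟩ := Multiset.card_eq_three.mp hS
  have h_coe : ({a, b, c} : Multiset (DihedralGroup 3)) = ([a, b, c] : List (DihedralGroup 3)) :=
    rfl
  rw [h_coe, isProdOneFree_coe_iff]
  revert a b c
  decide
end

section
/- For n ≥ 3, every sequence in the dihedral group D_{2n} consisting of n−2 copies of y^t (with gcd(t, n) = 1) together with two elements xy^u and xy^v has a nonempty subsequence with product 1. -/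
/-!
Let `k < n` solve `k t ≡ v - u (mod n)`, which is possible since `t` is a unit mod `n`.
Because `xy^u · y^{kt} · xy^v = y^{v - u - kt}`, the subsequence `xy^u, (y^t)^k, xy^v` has
product 1 as soon as `k ≤ n - 2`. Otherwise `k = n - 1`, i.e. `t ≡ u - v`, and then
`xy^v · y^t · xy^u = 1` uses a single copy of `y^t`.
-/

theorem not_isProdOneFree_of_prod_eq_one {G : Type*} [Group G] {S : Multiset G} {l : List G}
    (hle : (l : Multiset G) ≤ S) (hne : l ≠ []) (hprod : l.prod = 1) : ¬ IsProdOneFree S :=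
  fun h => h ⟨l, hle, by simpa using hne, l, rfl, hprod⟩

theorem ZMod.exists_lt_natCast_mul_eq {n : ℕ} [NeZero n] {a : ZMod n} (ha : IsUnit a)
    (b : ZMod n) : ∃ k < n, (k : ZMod n) * a = b :=
  ⟨(b * a⁻¹).val, ZMod.val_lt _, by
    rw [ZMod.natCast_zmod_val, mul_assoc, ZMod.inv_mul_of_unit a ha, mul_one]⟩

namespace DihedralGroup

variable {n : ℕ}

theorem sr_mul_r_pow_mul_sr (u v a : ZMod n) (k : ℕ) :
    sr u * r a ^ k * sr v = r (v - u - a * (k : ZMod n)) := by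
  rw [r_pow, sr_mul_r, sr_mul_sr]
  ring_nf

theorem not_isProdOneFree_replicate_r_add_sr_pair {m k : ℕ} (hkm : k ≤ m) {a u v : ZMod n}
    (hk : (k : ZMod n) * a = v - u) :
    ¬ IsProdOneFree (Multiset.replicate m (r a) + {sr u, sr v}) := by
  refine not_isProdOneFree_of_prod_eq_one (l := sr u :: List.replicate k (r a) ++ [sr v])
    ?_ (by simp) ?_
  · have hl : ((sr u :: List.replicate k (r a) ++ [sr v] : List (DihedralGroup n)) :
        Multiset (DihedralGroup n)) = Multiset.replicate k (r a) + {sr u, sr v} := by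
      simp only [← Multiset.coe_add, ← Multiset.cons_coe, Multiset.coe_replicate,
        Multiset.insert_eq_cons, ← Multiset.singleton_add]
      ac_rfl
    rw [hl]
    exact add_le_add_left (Multiset.replicate_le_replicate _ |>.mpr hkm) _
  · rw [List.prod_append, List.prod_cons, List.prod_replicate, List.prod_singleton,
      sr_mul_r_pow_mul_sr, mul_comm a, hk, sub_self, r_zero]

end DihedralGroup

theorem dihedral_case_c1 (n : ℕ) (hn : 3 ≤ n) (t : ℕ) (htn : Nat.gcd t n = 1)
    (u v : ZMod n) :
    ¬ IsProdOneFree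
      (Multiset.replicate (n - 2) (DihedralGroup.r (t : ZMod n)) +
        {DihedralGroup.sr u, DihedralGroup.sr v}) := by
  have : NeZero n := ⟨by omega⟩
  have ht : IsUnit (t : ZMod n) := (ZMod.isUnit_iff_coprime t n).mpr htn
  obtain ⟨k, hkn, hk⟩ := ZMod.exists_lt_natCast_mul_eq ht (v - u)
  by_cases hkm : k ≤ n - 2
  · exact DihedralGroup.not_isProdOneFree_replicate_r_add_sr_pair hkm hk
  · have hk_eq : k + 1 = n := by omega
    have hvu : ((1 : ℕ) : ZMod n) * t = u - v := by
      have hk' : ((k + 1 : ℕ) : ZMod n) = 0 := by rw [hk_eq, ZMod.natCast_self]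
      push_cast at hk' ⊢
      linear_combination (t : ZMod n) * hk' - hk
    rw [Multiset.pair_comm]
    exact DihedralGroup.not_isProdOneFree_replicate_r_add_sr_pair (by omega) hvu
end
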